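/- The bulk equation H3 with δ=0, Q(u00,u10,u01,u11;a,b) = a(u00·u10 + u01·u11) − b(u00·u01 + u10·u11), together with the boundary equation q(x,y,z;a) = y(x+z) and the parameter map σ(a) = μ/a (where μ is a fixed nonzero complex parameter and all occurring parameters a, b are nonzero), satisfies the 3D boundary consistency condition. -/

import Mathlib

/-- The bulk quad-graph equation. -/
noncomputable def Qbulk (u00 u10 u01 u11 a b : ℂ) : ℂ :=
  a * (u00 * u10 + u01 * u11) - b * (u00 * u01 + u10 * u11)

/-- The boundary equation. -/
noncomputable def qBdry (mu : ℂ) (x y z a : ℂ) : ℂ :=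
  y * (x + z)

/-- The parameter map acting on edge labels. -/
noncomputable def sigmaMap (mu : ℂ) (a : ℂ) : ℂ :=
  mu / a

/-!
The boundary equation `y (x + z) = 0`, with `y` its nonzero coefficient, reflects the vertex:
`z = -x`. Hence `y₂ = y₃ = -x` and `w₁ = w₂ = x`. The map `σ a = μ / a` only rescales the
parameters of `H3` with `δ = 0`: `Q(·; σ b, a) ∝ Q(·; μ, a b)` and `Q(·; σ b, σ a) ∝ Q(·; a, b)`.
The three bulk faces through `y₁` then force `Q(y₁, z₁, z₂, x; a, b) = 0`, so `x` also solves the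
last bulk equation, whose solution `w₃` is unique.
-/

lemma qBdry_one_sub_qBdry_zero (mu x y a : ℂ) : qBdry mu x y 1 a - qBdry mu x y 0 a = y := by
  unfold qBdry; ring

lemma eq_neg_of_qBdry_eq_zero {mu x y z a : ℂ} (h : qBdry mu x y z a = 0)
    (hc : qBdry mu x y 1 a - qBdry mu x y 0 a ≠ 0) : z = -x := by
  rw [qBdry_one_sub_qBdry_zero] at hc
  exact eq_neg_of_add_eq_zero_right ((mul_eq_zero.mp h).resolve_left hc)

lemma Qbulk_one_sub_Qbulk_zero_u10 (u00 u01 u11 a b : ℂ) :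
    Qbulk u00 1 u01 u11 a b - Qbulk u00 0 u01 u11 a b = a * u00 - b * u11 := by
  unfold Qbulk; ring

lemma Qbulk_one_sub_Qbulk_zero_u11 (u00 u10 u01 a b : ℂ) :
    Qbulk u00 u10 u01 1 a b - Qbulk u00 u10 u01 0 a b = a * u01 - b * u10 := by
  unfold Qbulk; ring

lemma eq_of_Qbulk_eq_zero {u00 u10 u01 v w a b : ℂ} (hv : Qbulk u00 u10 u01 v a b = 0)
    (hw : Qbulk u00 u10 u01 w a b = 0)
    (hc : Qbulk u00 u10 u01 1 a b - Qbulk u00 u10 u01 0 a b ≠ 0) : v = w := by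
  rw [Qbulk_one_sub_Qbulk_zero_u11] at hc
  have h : (a * u01 - b * u10) * (v - w) = 0 := by
    unfold Qbulk at hv hw
    linear_combination hv - hw
  exact sub_eq_zero.mp ((mul_eq_zero.mp h).resolve_left hc)

lemma Qbulk_mul_params (u00 u10 u01 u11 c a b : ℂ) :
    Qbulk u00 u10 u01 u11 (c * a) (c * b) = c * Qbulk u00 u10 u01 u11 a b := by
  unfold Qbulk; ring

lemma Qbulk_sigmaMap_left {b : ℂ} (hb : b ≠ 0) (mu u00 u10 u01 u11 a : ℂ) :
    Qbulk u00 u10 u01 u11 (sigmaMap mu b) a = b⁻¹ * Qbulk u00 u10 u01 u11 mu (a * b) := by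
  rw [← Qbulk_mul_params, sigmaMap]
  congr 1 <;> field_simp

lemma Qbulk_sigmaMap_sigmaMap {a b : ℂ} (ha : a ≠ 0) (hb : b ≠ 0) (mu u00 u10 u01 u11 : ℂ) :
    Qbulk u00 u10 u01 u11 (sigmaMap mu b) (sigmaMap mu a) =
      mu / (a * b) * Qbulk u00 u10 u01 u11 a b := by
  rw [← Qbulk_mul_params, sigmaMap, sigmaMap]
  congr 1 <;> field_simp

lemma Qbulk_eq_zero_of_Qbulk_sigmaMap_left_eq_zero {mu a b u00 u10 u01 u11 : ℂ} (hb : b ≠ 0)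
    (h : Qbulk u00 u10 u01 u11 (sigmaMap mu b) a = 0) : Qbulk u00 u10 u01 u11 mu (a * b) = 0 := by
  rw [Qbulk_sigmaMap_left hb, mul_eq_zero] at h
  exact h.resolve_left (inv_ne_zero hb)

lemma Qbulk_eq_zero_of_faces {y1 x x1 x2 z1 z2 a b c d : ℂ} (h1 : Qbulk y1 x2 x1 x a b = 0)
    (h2 : Qbulk y1 z1 x2 (-x) c d = 0) (h3 : Qbulk y1 z2 x1 (-x) c d = 0)
    (hc : Qbulk y1 1 x2 (-x) c d - Qbulk y1 0 x2 (-x) c d ≠ 0) :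
    Qbulk y1 z1 z2 x a b = 0 := by
  rw [Qbulk_one_sub_Qbulk_zero_u10] at hc
  apply mul_left_cancel₀ hc
  unfold Qbulk at *
  linear_combination (c * x + d * y1) * h1 + (a * y1 - b * x) * h2 + (a * x - b * y1) * h3

theorem boundary_consistency_stmt_10_general
    (mu : ℂ) (a b : ℂ) (ha : a ≠ 0) (hb : b ≠ 0)
    (x x1 x2 y1 y2 y3 z1 z2 w1 w2 w3 : ℂ)
    -- the eight equations of the scheme
    (e1 : Qbulk y1 x2 x1 x a b = 0)
    (e2 : qBdry mu x x1 y2 a = 0)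
    (e3 : qBdry mu x x2 y3 b = 0)
    (e4 : Qbulk y1 z1 x2 y3 (sigmaMap mu b) a = 0)
    (e5 : Qbulk y1 z2 x1 y2 (sigmaMap mu a) b = 0)
    (e6 : qBdry mu y2 z2 w1 b = 0)
    (e7 : qBdry mu y3 z1 w2 a = 0)
    (e8 : Qbulk y1 z1 z2 w3 (sigmaMap mu b) (sigmaMap mu a) = 0)
    -- nonvanishing of the coefficient of the determined variable in each
    -- affine-linear equation (coefficient = value at 1 minus value at 0)
    (c2 : qBdry mu x x1 1 a - qBdry mu x x1 0 a ≠ 0)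
    (c3 : qBdry mu x x2 1 b - qBdry mu x x2 0 b ≠ 0)
    (c4 : Qbulk y1 1 x2 y3 (sigmaMap mu b) a - Qbulk y1 0 x2 y3 (sigmaMap mu b) a ≠ 0)
    (c6 : qBdry mu y2 z2 1 b - qBdry mu y2 z2 0 b ≠ 0)
    (c7 : qBdry mu y3 z1 1 a - qBdry mu y3 z1 0 a ≠ 0)
    (c8 : Qbulk y1 z1 z2 1 (sigmaMap mu b) (sigmaMap mu a) - Qbulk y1 z1 z2 0 (sigmaMap mu b) (sigmaMap mu a) ≠ 0) :
    w1 = w2 ∧ w2 = w3 := by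
  obtain rfl : y2 = -x := eq_neg_of_qBdry_eq_zero e2 c2
  obtain rfl : y3 = -x := eq_neg_of_qBdry_eq_zero e3 c3
  have hw1 : w1 = x := (eq_neg_of_qBdry_eq_zero e6 c6).trans (neg_neg x)
  have hw2 : w2 = x := (eq_neg_of_qBdry_eq_zero e7 c7).trans (neg_neg x)
  have h4 := Qbulk_eq_zero_of_Qbulk_sigmaMap_left_eq_zero hb e4
  have h5 := Qbulk_eq_zero_of_Qbulk_sigmaMap_left_eq_zero ha e5
  rw [mul_comm b a] at h5
  rw [Qbulk_sigmaMap_left hb, Qbulk_sigmaMap_left hb, ← mul_sub] at c4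
  have hdiag : Qbulk y1 z1 z2 x a b = 0 := Qbulk_eq_zero_of_faces e1 h4 h5 (right_ne_zero_of_mul c4)
  have hdiag' : Qbulk y1 z1 z2 x (sigmaMap mu b) (sigmaMap mu a) = 0 := by
    rw [Qbulk_sigmaMap_sigmaMap ha hb, hdiag, mul_zero]
  exact ⟨hw1.trans hw2.symm, hw2.trans (eq_of_Qbulk_eq_zero hdiag' e8 c8)⟩

/-- 3D boundary consistency of the triple (Q, q, σ). -/
theorem boundary_consistency_stmt_10
    (mu : ℂ) (a b : ℂ) (hμ : mu ≠ 0) (ha : a ≠ 0) (hb : b ≠ 0)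
    (x x1 x2 y1 y2 y3 z1 z2 w1 w2 w3 : ℂ)
    -- the eight equations of the scheme
    (e1 : Qbulk y1 x2 x1 x a b = 0)
    (e2 : qBdry mu x x1 y2 a = 0)
    (e3 : qBdry mu x x2 y3 b = 0)
    (e4 : Qbulk y1 z1 x2 y3 (sigmaMap mu b) a = 0)
    (e5 : Qbulk y1 z2 x1 y2 (sigmaMap mu a) b = 0)
    (e6 : qBdry mu y2 z2 w1 b = 0)
    (e7 : qBdry mu y3 z1 w2 a = 0)
    (e8 : Qbulk y1 z1 z2 w3 (sigmaMap mu b) (sigmaMap mu a) = 0)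
    -- nonvanishing of the coefficient of the determined variable in each
    -- affine-linear equation (coefficient = value at 1 minus value at 0)
    (c1 : Qbulk 1 x2 x1 x a b - Qbulk 0 x2 x1 x a b ≠ 0)
    (c2 : qBdry mu x x1 1 a - qBdry mu x x1 0 a ≠ 0)
    (c3 : qBdry mu x x2 1 b - qBdry mu x x2 0 b ≠ 0)
    (c4 : Qbulk y1 1 x2 y3 (sigmaMap mu b) a - Qbulk y1 0 x2 y3 (sigmaMap mu b) a ≠ 0)
    (c5 : Qbulk y1 1 x1 y2 (sigmaMap mu a) b - Qbulk y1 0 x1 y2 (sigmaMap mu a) b ≠ 0)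
    (c6 : qBdry mu y2 z2 1 b - qBdry mu y2 z2 0 b ≠ 0)
    (c7 : qBdry mu y3 z1 1 a - qBdry mu y3 z1 0 a ≠ 0)
    (c8 : Qbulk y1 z1 z2 1 (sigmaMap mu b) (sigmaMap mu a) - Qbulk y1 z1 z2 0 (sigmaMap mu b) (sigmaMap mu a) ≠ 0) :
    w1 = w2 ∧ w2 = w3 :=
  boundary_consistency_stmt_10_general mu a b ha hb x x1 x2 y1 y2 y3 z1 z2 w1 w2 w3 e1 e2 e3 e4 e5
    e6 e7 e8 c2 c3 c4 c6 c7 c8
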